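/- arXiv:2501.03858 — 2 statements merged into one kernel-verified Lean document; each statement's English description precedes it below -/
import Mathlib

section
/- Let S and A be, respectively, the set of G-equivariant functions in L2(X,Y,μ) and the set of f ∈ L2(X,Y,μ) with Qf = 0. For every f ∈ L2(X,Y,μ), the averaged function f̄ = Qf is the unique solution (as an element of L2) of the least squares problem argmin_{s ∈ S} ‖f − s‖_μ², i.e., ‖f − f̄‖_μ ≤ ‖f − s‖_μ for all s ∈ S, with equality only if s = f̄ in L2(X,Y,μ). -/
/-!
Right invariance of `λ` makes `Q f` equivariant, and Jensen's inequality in the variable `g`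
bounds `‖Q f‖₂` by `‖f‖₂`. For an equivariant `h ∈ L²`, unitarity of `ψ` turns
`⟨ψ(g)⁻¹ f(φ(g)x), h x⟩` into `⟨f(φ(g)x), h(φ(g)x)⟩`, and since `(g, x) ↦ φ(g)x` pushes `λ ⊗ μ`
forward to `μ`, Fubini gives `⟨Q f, h⟩_μ = ⟨f, h⟩_μ`. Thus `f - Q f` is orthogonal to every
equivariant function, in particular to `Q f - s`, and Pythagoras yields
`‖f - s‖² = ‖f - Q f‖² + ‖Q f - s‖²`.
-/

open MeasureTheory
open scoped ENNReal

/-- The equivariant averaging operator `Q f (x) = ∫_G ψ(g)⁻¹ f (φ(g) x) dλ(g)`. -/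
noncomputable def avgQ {G X : Type*} [MeasurableSpace G] {k : ℕ}
    (lam : Measure G) (φ : G → X → X)
    (ψ : G → (EuclideanSpace ℝ (Fin k) ≃ₗᵢ[ℝ] EuclideanSpace ℝ (Fin k)))
    (f : X → EuclideanSpace ℝ (Fin k)) : X → EuclideanSpace ℝ (Fin k) :=
  fun x => ∫ g, (ψ g).symm (f (φ g x)) ∂lam

/-- `f` is `G`-equivariant: `f (φ g x) = ψ g (f x)` for all `g, x`. -/
def IsEquivariant {G X : Type*} {k : ℕ} (φ : G → X → X)
    (ψ : G → (EuclideanSpace ℝ (Fin k) ≃ₗᵢ[ℝ] EuclideanSpace ℝ (Fin k)))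
    (f : X → EuclideanSpace ℝ (Fin k)) : Prop :=
  ∀ g x, f (φ g x) = ψ g (f x)

open scoped InnerProductSpace

section LeastSquares

variable {α E : Type*} [MeasurableSpace α] {μ : Measure α} [NormedAddCommGroup E]

theorem MeasureTheory.MemLp.integrable_inner [InnerProductSpace ℝ E] {f g : α → E}
    (hf : MemLp f 2 μ) (hg : MemLp g 2 μ) : Integrable (fun x => ⟪f x, g x⟫_ℝ) μ :=
  (L2.integrable_inner (𝕜 := ℝ) (hf.toLp f) (hg.toLp g)).congr <| by
    filter_upwards [hf.coeFn_toLp, hg.coeFn_toLp] with x hfx hgx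
    rw [hfx, hgx]

theorem MeasureTheory.MemLp.integrable_norm_sq {f : α → E} (hf : MemLp f 2 μ) :
    Integrable (fun x => ‖f x‖ ^ 2) μ :=
  (memLp_two_iff_integrable_sq_norm hf.1).1 hf

theorem norm_integral_sq_le_integral_norm_sq [NormedSpace ℝ E] [CompleteSpace E]
    [IsProbabilityMeasure μ] {u : α → E} (hu : Integrable u μ)
    (hu2 : Integrable (fun x => ‖u x‖ ^ 2) μ) :
    ‖∫ x, u x ∂μ‖ ^ 2 ≤ ∫ x, ‖u x‖ ^ 2 ∂μ :=
  (convexOn_univ_norm.pow (fun _ _ => norm_nonneg _) 2).map_integral_le (by fun_prop)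
    isClosed_univ (ae_of_all _ fun _ => trivial) hu hu2

theorem MeasureTheory.MemLp.prod_left_ae [SFinite μ] {β : Type*} [MeasurableSpace β]
    {ν : Measure β} [SFinite ν] {F : β × α → E} (hF : MemLp F 2 (ν.prod μ)) :
    ∀ᵐ x ∂μ, MemLp (fun y => F (y, x)) 2 ν := by
  filter_upwards [hF.1.prodMk_right, hF.integrable_norm_sq.prod_left_ae] with x hx hx2
  exact (memLp_two_iff_integrable_sq_norm hx).2 hx2

theorem memLp_two_integral_prod_left [NormedSpace ℝ E] [CompleteSpace E] [SFinite μ]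
    {β : Type*} [MeasurableSpace β] {ν : Measure β} [IsProbabilityMeasure ν] {F : β × α → E}
    (hF : MemLp F 2 (ν.prod μ)) : MemLp (fun x => ∫ y, F (y, x) ∂ν) 2 μ := by
  have hmeas : AEStronglyMeasurable (fun x => ∫ y, F (y, x) ∂ν) μ :=
    hF.1.prod_swap.integral_prod_right'
  refine (memLp_two_iff_integrable_sq_norm hmeas).2
    (hF.integrable_norm_sq.integral_prod_right.mono' (hmeas.norm.pow 2) ?_)
  filter_upwards [hF.prod_left_ae] with x hx
  rw [Real.norm_of_nonneg (sq_nonneg _)]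
  exact norm_integral_sq_le_integral_norm_sq (hx.integrable one_le_two) hx.integrable_norm_sq

theorem integral_norm_sub_sq_eq_add [InnerProductSpace ℝ E] {f q s : α → E}
    (hf : MemLp f 2 μ) (hq : MemLp q 2 μ) (hs : MemLp s 2 μ)
    (horth : ∫ x, ⟪q x - s x, f x - q x⟫_ℝ ∂μ = 0) :
    ∫ x, ‖f x - s x‖ ^ 2 ∂μ = ∫ x, ‖f x - q x‖ ^ 2 ∂μ + ∫ x, ‖q x - s x‖ ^ 2 ∂μ := by
  have hpt : ∀ x, ‖f x - s x‖ ^ 2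
      = ‖f x - q x‖ ^ 2 + 2 * ⟪q x - s x, f x - q x⟫_ℝ + ‖q x - s x‖ ^ 2 := fun x => by
    rw [← sub_add_sub_cancel (f x) (q x) (s x), norm_add_sq_real, real_inner_comm]
  have hfq : Integrable (fun x => ‖f x - q x‖ ^ 2) μ := (hf.sub hq).integrable_norm_sq
  have hqs : Integrable (fun x => ‖q x - s x‖ ^ 2) μ := (hq.sub hs).integrable_norm_sq
  have hinner : Integrable (fun x => 2 * ⟪q x - s x, f x - q x⟫_ℝ) μ :=
    ((hq.sub hs).integrable_inner (hf.sub hq)).const_mul 2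
  rw [integral_congr_ae (ae_of_all _ hpt),
    integral_add (f := fun x => ‖f x - q x‖ ^ 2 + 2 * ⟪q x - s x, f x - q x⟫_ℝ)
      (hfq.add hinner) hqs,
    integral_add hfq hinner, integral_const_mul, horth, mul_zero, add_zero]

theorem ae_eq_of_integral_norm_sub_sq_eq_zero {q s : α → E} (hq : MemLp q 2 μ)
    (hs : MemLp s 2 μ) (h : ∫ x, ‖q x - s x‖ ^ 2 ∂μ = 0) : q =ᵐ[μ] s := by
  filter_upwards [(integral_eq_zero_iff_of_nonneg (fun _ => sq_nonneg _)
    (hq.sub hs).integrable_norm_sq).1 h] with x hx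
  simpa [sub_eq_zero] using hx

end LeastSquares

theorem measurePreserving_uncurry_of_map_eq {G X : Type*} [MeasurableSpace G]
    [MeasurableSpace X] {lam : Measure G} [IsProbabilityMeasure lam] {μ : Measure X} [SFinite μ]
    {φ : G → X → X} (hφ_meas : Measurable (Function.uncurry φ))
    (hμ_inv : ∀ g, Measure.map (φ g) μ = μ) :
    MeasurePreserving (Function.uncurry φ) (lam.prod μ) μ := by
  refine ⟨hφ_meas, Measure.ext fun A hA => ?_⟩
  have hfiber : ∀ g, μ (Prod.mk g ⁻¹' (Function.uncurry φ ⁻¹' A)) = μ A := fun g => by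
    have hφg : Measurable (φ g) := hφ_meas.comp measurable_prodMk_left
    change μ (φ g ⁻¹' A) = μ A
    rw [← Measure.map_apply hφg hA, hμ_inv g]
  simp [Measure.map_apply hφ_meas hA, Measure.prod_apply (hφ_meas hA), hfiber]

section Averaging

variable {G X : Type*} {φ : G → X → X} {k : ℕ}
  {ψ : G → (EuclideanSpace ℝ (Fin k) ≃ₗᵢ[ℝ] EuclideanSpace ℝ (Fin k))}

theorem IsEquivariant.sub {f s : X → EuclideanSpace ℝ (Fin k)} (hf : IsEquivariant φ ψ f)
    (hs : IsEquivariant φ ψ s) : IsEquivariant φ ψ (f - s) := fun g x => by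
  simp [hf g x, hs g x]

noncomputable def avgIntegrand (φ : G → X → X)
    (ψ : G → (EuclideanSpace ℝ (Fin k) ≃ₗᵢ[ℝ] EuclideanSpace ℝ (Fin k)))
    (f : X → EuclideanSpace ℝ (Fin k)) (p : G × X) : EuclideanSpace ℝ (Fin k) :=
  (ψ p.1).symm (f (φ p.1 p.2))

variable [MeasurableSpace G] {lam : Measure G}

section Group

variable [Group G]

theorem measurable_symm_apply [MeasurableInv G]
    (hψ_meas : Measurable fun p : G × EuclideanSpace ℝ (Fin k) => ψ p.1 p.2)
    (hψ_one : ∀ v, ψ 1 v = v) (hψ_mul : ∀ g h v, ψ (g * h) v = ψ g (ψ h v)) :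
    Measurable fun p : G × EuclideanSpace ℝ (Fin k) => (ψ p.1).symm p.2 := by
  have hsymm : ∀ g v, (ψ g).symm v = ψ g⁻¹ v := fun g v => by
    rw [LinearIsometryEquiv.symm_apply_eq, ← hψ_mul, mul_inv_cancel, hψ_one]
  simp_rw [hsymm]
  exact hψ_meas.comp (measurable_fst.inv.prodMk measurable_snd)

theorem isEquivariant_avgQ [MeasurableMul G] [lam.IsMulRightInvariant]
    (hφ_mul : ∀ g h x, φ (g * h) x = φ g (φ h x))
    (hψ_mul : ∀ g h v, ψ (g * h) v = ψ g (ψ h v)) (f : X → EuclideanSpace ℝ (Fin k)) :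
    IsEquivariant φ ψ (avgQ lam φ ψ f) := by
  intro h x
  have hcocycle : ∀ g w, ψ h ((ψ (g * h)).symm w) = (ψ g).symm w := fun g w => by
    rw [eq_comm, LinearIsometryEquiv.symm_apply_eq, ← hψ_mul,
      LinearIsometryEquiv.apply_symm_apply]
  calc avgQ lam φ ψ f (φ h x)
      = ∫ g, ψ h ((ψ (g * h)).symm (f (φ (g * h) x))) ∂lam := by
        simp only [avgQ, hcocycle, hφ_mul]
    _ = ∫ g, ψ h ((ψ g).symm (f (φ g x))) ∂lam :=
        integral_mul_right_eq_self (fun g => ψ h ((ψ g).symm (f (φ g x)))) h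
    _ = ψ h (avgQ lam φ ψ f x) := (ψ h).toLinearIsometry.integral_comp_comm _

end Group

variable [MeasurableSpace X] {μ : Measure X}

theorem memLp_avgIntegrand
    (hact : MeasurePreserving (Function.uncurry φ) (lam.prod μ) μ)
    (hψ_symm : Measurable fun p : G × EuclideanSpace ℝ (Fin k) => (ψ p.1).symm p.2)
    {f : X → EuclideanSpace ℝ (Fin k)} (hf : MemLp f 2 μ) :
    MemLp (avgIntegrand φ ψ f) 2 (lam.prod μ) := by
  have hfφ : MemLp (fun p => f (Function.uncurry φ p)) 2 (lam.prod μ) :=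
    hf.comp_measurePreserving hact
  refine hfφ.of_le ?_ (ae_of_all _ fun p => (LinearIsometryEquiv.norm_map _ _).le)
  exact (hψ_symm.comp_aemeasurable
    (measurable_fst.aemeasurable.prodMk hfφ.1.aemeasurable)).aestronglyMeasurable

variable [IsProbabilityMeasure lam] [SFinite μ]

theorem memLp_avgQ
    (hact : MeasurePreserving (Function.uncurry φ) (lam.prod μ) μ)
    (hψ_symm : Measurable fun p : G × EuclideanSpace ℝ (Fin k) => (ψ p.1).symm p.2)
    {f : X → EuclideanSpace ℝ (Fin k)} (hf : MemLp f 2 μ) :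
    MemLp (avgQ lam φ ψ f) 2 μ :=
  memLp_two_integral_prod_left (memLp_avgIntegrand hact hψ_symm hf)

theorem integral_inner_avgQ_of_isEquivariant
    (hact : MeasurePreserving (Function.uncurry φ) (lam.prod μ) μ)
    (hψ_symm : Measurable fun p : G × EuclideanSpace ℝ (Fin k) => (ψ p.1).symm p.2)
    {f h : X → EuclideanSpace ℝ (Fin k)} (hf : MemLp f 2 μ) (hh : MemLp h 2 μ)
    (hh_equiv : IsEquivariant φ ψ h) :
    ∫ x, ⟪h x, avgQ lam φ ψ f x⟫_ℝ ∂μ = ∫ x, ⟪h x, f x⟫_ℝ ∂μ := by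
  have hF := memLp_avgIntegrand hact hψ_symm hf
  have hH : MemLp (fun p : G × X => h p.2) 2 (lam.prod μ) :=
    hh.comp_measurePreserving measurePreserving_snd
  have hflip : ∀ p : G × X, ⟪h p.2, avgIntegrand φ ψ f p⟫_ℝ
      = ⟪h (Function.uncurry φ p), f (Function.uncurry φ p)⟫_ℝ := fun p => by
    rw [avgIntegrand, ← LinearIsometryEquiv.inner_map_eq_flip, ← hh_equiv]
    rfl
  calc ∫ x, ⟪h x, avgQ lam φ ψ f x⟫_ℝ ∂μ
      = ∫ x, ∫ g, ⟪h x, avgIntegrand φ ψ f (g, x)⟫_ℝ ∂lam ∂μ := by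
        refine integral_congr_ae ?_
        filter_upwards [hF.prod_left_ae] with x hx
        exact (integral_inner (hx.integrable one_le_two) (h x)).symm
    _ = ∫ p, ⟪h p.2, avgIntegrand φ ψ f p⟫_ℝ ∂(lam.prod μ) :=
        (integral_prod_symm _ (hH.integrable_inner hF)).symm
    _ = ∫ p, ⟪h (Function.uncurry φ p), f (Function.uncurry φ p)⟫_ℝ ∂(lam.prod μ) := by
        simp only [hflip]
    _ = ∫ x, ⟪h x, f x⟫_ℝ ∂μ := by
        have hmeas := (hh.integrable_inner hf).aestronglyMeasurable
        rw [← hact.map_eq] at hmeas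
        rw [← integral_map hact.aemeasurable hmeas, hact.map_eq]

theorem integral_inner_sub_avgQ_eq_zero
    (hact : MeasurePreserving (Function.uncurry φ) (lam.prod μ) μ)
    (hψ_symm : Measurable fun p : G × EuclideanSpace ℝ (Fin k) => (ψ p.1).symm p.2)
    {f h : X → EuclideanSpace ℝ (Fin k)} (hf : MemLp f 2 μ) (hh : MemLp h 2 μ)
    (hh_equiv : IsEquivariant φ ψ h) :
    ∫ x, ⟪h x, f x - avgQ lam φ ψ f x⟫_ℝ ∂μ = 0 := by
  simp_rw [inner_sub_right]
  rw [integral_sub (hh.integrable_inner hf)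
      (hh.integrable_inner (memLp_avgQ hact hψ_symm hf)),
    integral_inner_avgQ_of_isEquivariant hact hψ_symm hf hh hh_equiv, sub_self]

end Averaging

theorem stmt_4_general {G X : Type*} [Group G] [TopologicalSpace G] [IsTopologicalGroup G]
    [MeasurableSpace G] [BorelSpace G]
    [MeasurableSpace X]
    {k : ℕ}
    (lam : Measure G) [IsProbabilityMeasure lam]
    (hlam_right : ∀ g : G, Measure.map (fun h => h * g) lam = lam)
    (φ : G → X → X)
    (hφ_meas : Measurable fun p : G × X => φ p.1 p.2)
    (hφ_mul : ∀ g h x, φ (g * h) x = φ g (φ h x))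
    (ψ : G → (EuclideanSpace ℝ (Fin k) ≃ₗᵢ[ℝ] EuclideanSpace ℝ (Fin k)))
    (hψ_meas : Measurable fun p : G × EuclideanSpace ℝ (Fin k) => ψ p.1 p.2)
    (hψ_one : ∀ v, ψ 1 v = v)
    (hψ_mul : ∀ g h v, ψ (g * h) v = ψ g (ψ h v))
    (μ : Measure X) [IsProbabilityMeasure μ]
    (hμ_inv : ∀ g : G, Measure.map (φ g) μ = μ)
    (f : X → EuclideanSpace ℝ (Fin k))
    (hf : MemLp f 2 μ) :
    IsEquivariant φ ψ (avgQ lam φ ψ f) ∧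
    MemLp (avgQ lam φ ψ f) 2 μ ∧
    ∀ s : X → EuclideanSpace ℝ (Fin k), MemLp s 2 μ → IsEquivariant φ ψ s →
      (∫ x, ‖f x - avgQ lam φ ψ f x‖ ^ 2 ∂μ ≤ ∫ x, ‖f x - s x‖ ^ 2 ∂μ ∧
        (∫ x, ‖f x - s x‖ ^ 2 ∂μ = ∫ x, ‖f x - avgQ lam φ ψ f x‖ ^ 2 ∂μ →
          s =ᵐ[μ] avgQ lam φ ψ f)) := by
  have : lam.IsMulRightInvariant := ⟨hlam_right⟩
  have hact := measurePreserving_uncurry_of_map_eq (lam := lam) hφ_meas hμ_inv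
  have hψ_symm := measurable_symm_apply hψ_meas hψ_one hψ_mul
  have hQ_equiv := isEquivariant_avgQ (lam := lam) hφ_mul hψ_mul f
  have hQ := memLp_avgQ hact hψ_symm hf
  refine ⟨hQ_equiv, hQ, fun s hs hs_equiv => ?_⟩
  have hpythagoras := integral_norm_sub_sq_eq_add hf hQ hs <|
    integral_inner_sub_avgQ_eq_zero hact hψ_symm hf (hQ.sub hs) (hQ_equiv.sub hs_equiv)
  rw [hpythagoras]
  refine ⟨le_add_of_nonneg_right (integral_nonneg fun _ => sq_nonneg _), fun heq => ?_⟩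
  exact (ae_eq_of_integral_norm_sub_sq_eq_zero hQ hs (by linarith)).symm

/-- Feature averaging solves a least squares problem: `Q f` is the unique (as an
element of `L2`) closest `G`-equivariant function to `f` in `L2(X,Y,μ)`. -/
theorem stmt_4 {G X : Type*} [Group G] [TopologicalSpace G] [IsTopologicalGroup G]
    [CompactSpace G] [SecondCountableTopology G] [T2Space G]
    [MeasurableSpace G] [BorelSpace G]
    [TopologicalSpace X] [PolishSpace X] [MeasurableSpace X] [BorelSpace X]
    {k : ℕ}
    (lam : Measure G) [IsProbabilityMeasure lam]
    (hlam_left : ∀ g : G, Measure.map (fun h => g * h) lam = lam)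
    (hlam_right : ∀ g : G, Measure.map (fun h => h * g) lam = lam)
    (hlam_inv : Measure.map (fun g : G => g⁻¹) lam = lam)
    (φ : G → X → X)
    (hφ_meas : Measurable fun p : G × X => φ p.1 p.2)
    (hφ_one : ∀ x, φ 1 x = x)
    (hφ_mul : ∀ g h x, φ (g * h) x = φ g (φ h x))
    (ψ : G → (EuclideanSpace ℝ (Fin k) ≃ₗᵢ[ℝ] EuclideanSpace ℝ (Fin k)))
    (hψ_meas : Measurable fun p : G × EuclideanSpace ℝ (Fin k) => ψ p.1 p.2)
    (hψ_one : ∀ v, ψ 1 v = v)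
    (hψ_mul : ∀ g h v, ψ (g * h) v = ψ g (ψ h v))
    (μ : Measure X) [IsProbabilityMeasure μ]
    (hμ_inv : ∀ g : G, Measure.map (φ g) μ = μ)
    (f : X → EuclideanSpace ℝ (Fin k))
    (hf : MemLp f 2 μ) :
    IsEquivariant φ ψ (avgQ lam φ ψ f) ∧
    MemLp (avgQ lam φ ψ f) 2 μ ∧
    ∀ s : X → EuclideanSpace ℝ (Fin k), MemLp s 2 μ → IsEquivariant φ ψ s →
      (∫ x, ‖f x - avgQ lam φ ψ f x‖ ^ 2 ∂μ ≤ ∫ x, ‖f x - s x‖ ^ 2 ∂μ ∧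
        (∫ x, ‖f x - s x‖ ^ 2 ∂μ = ∫ x, ‖f x - avgQ lam φ ψ f x‖ ^ 2 ∂μ →
          s =ᵐ[μ] avgQ lam φ ψ f)) :=
  stmt_4_general lam hlam_right φ hφ_meas hφ_mul ψ hψ_meas hψ_one hψ_mul μ hμ_inv f hf
end

section
/- Let k be a measurable kernel with sup_x k(x,x) < ∞, let k̄(x,y) = ∫_G k(x,gy) dλ(g) and k⊥ = k − k̄, and let μ be a G-invariant probability measure. Then N[k] = N[k̄] + N[k⊥], where N[j] = ∫∫ j(x,y)² dμ(x) dμ(y) for j : X × X → ℝ. -/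
/-!
A positive semidefinite kernel with bounded diagonal is bounded, so all functions involved are
square-integrable. Right invariance of `λ` (from left and inversion invariance) makes
`k̄(x, ·)` constant on orbits, and for every bounded orbit-invariant `u`, μ-invariance and
Fubini give `∫ u k(x, ·) dμ = ∫ u k̄(x, ·) dμ`: averaging over orbits is the orthogonal projection of
`L²(μ)` onto invariant functions. Hence `k̄(x, ·) ⟂ k⊥(x, ·)` for each `x`, and Pythagoras
integrated over `x` gives the claim.
-/

open MeasureTheory

theorem abs_le_of_posSemidef_of_diag_le {X : Type*} {k : X → X → ℝ}
    (hk_symm : ∀ x y, k x y = k y x)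
    (hk_pos : ∀ (m : ℕ) (xs : Fin m → X), Function.Injective xs →
      (Matrix.of fun i j => k (xs i) (xs j)).PosSemidef)
    {M : ℝ} (hM : ∀ x, k x x ≤ M) (x y : X) : |k x y| ≤ M := by
  by_cases hxy : x = y
  · subst hxy
    have hdiag := (Matrix.posSemidef_iff_dotProduct_mulVec.mp
      (hk_pos 1 (fun _ => x) (Function.injective_of_subsingleton _))).2 ![1]
    simp only [dotProduct, Matrix.mulVec, Fin.sum_univ_one] at hdiag
    rw [abs_of_nonneg (by simpa using hdiag)]
    exact hM x
  · have hinj : Function.Injective ![x, y] := by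
      intro i j hij
      fin_cases i <;> fin_cases j <;> simp_all
    have hpsd := Matrix.posSemidef_iff_dotProduct_mulVec.mp (hk_pos 2 ![x, y] hinj)
    -- testing against `(1, ±1)` gives `2 |k x y| ≤ k x x + k y y`
    have hplus := hpsd.2 ![1, 1]
    have hminus := hpsd.2 ![1, -1]
    simp only [dotProduct, Pi.star_apply, star_trivial, Matrix.mulVec, Matrix.of_apply,
      Fin.sum_univ_two, Matrix.cons_val_zero, Matrix.cons_val_one, Matrix.cons_val_fin_one,
      mul_one, one_mul, mul_neg, neg_mul, neg_add_rev, neg_neg] at hplus hminus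
    rw [abs_le]
    constructor <;> nlinarith [hk_symm x y, hM x, hM y]

theorem MeasureTheory.Measure.isMulRightInvariant_of_isInvInvariant {G : Type*} [Group G]
    [MeasurableSpace G] [MeasurableMul G] [MeasurableInv G] (μ : Measure G) [μ.IsMulLeftInvariant]
    [μ.IsInvInvariant] : μ.IsMulRightInvariant := by
  refine ⟨fun h => ?_⟩
  have := ((Measure.measurePreserving_inv μ).comp
    ((measurePreserving_mul_left μ h⁻¹).comp (Measure.measurePreserving_inv μ))).map_eq
  simpa [Function.comp_def] using this

section OrbitAverage

variable {G X : Type*} [MeasurableSpace G]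

noncomputable def orbitAverage (lam : Measure G) (φ : G → X → X) (f : X → ℝ) (y : X) : ℝ :=
  ∫ g, f (φ g y) ∂lam

variable {lam : Measure G} {φ : G → X → X}

theorem orbitAverage_invariant [Group G] [MeasurableMul G] [lam.IsMulRightInvariant]
    (hφ_mul : ∀ g h x, φ (g * h) x = φ g (φ h x)) (f : X → ℝ) (h : G) (y : X) :
    orbitAverage lam φ f (φ h y) = orbitAverage lam φ f y := by
  simp only [orbitAverage, ← hφ_mul]
  exact integral_mul_right_eq_self (fun g => f (φ g y)) h

theorem abs_orbitAverage_le [IsProbabilityMeasure lam] {f : X → ℝ} {C : ℝ}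
    (hf : ∀ y, |f y| ≤ C) (y : X) : |orbitAverage lam φ f y| ≤ C := by
  simpa [orbitAverage] using norm_integral_le_of_norm_le_const (μ := lam)
    (f := fun g => f (φ g y))
    (Filter.Eventually.of_forall fun g => (Real.norm_eq_abs _).trans_le (hf _))

theorem measurable_orbitAverage [MeasurableSpace X] [SFinite lam]
    (hφ : Measurable fun p : G × X => φ p.1 p.2) {f : X → ℝ} (hf : Measurable f) :
    Measurable (orbitAverage lam φ f) :=
  (hf.comp (hφ.comp measurable_swap)).stronglyMeasurable.integral_prod_right'.measurable

-- A family of orbit averages is the orbit average for the action on the second factor.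
theorem measurable_orbitAverage_uncurry [MeasurableSpace X] [SFinite lam] {Z : Type*}
    [MeasurableSpace Z] (hφ : Measurable fun p : G × X => φ p.1 p.2) {k : Z → X → ℝ}
    (hk : Measurable (Function.uncurry k)) :
    Measurable fun p : Z × X => orbitAverage lam φ (k p.1) p.2 :=
  measurable_orbitAverage (φ := fun g p => (p.1, φ g p.2))
    (measurable_snd.fst.prodMk (hφ.comp (measurable_fst.prodMk measurable_snd.snd))) hk

end OrbitAverage

theorem integral_comp_eq_of_map_eq {α E : Type*} [MeasurableSpace α] [NormedAddCommGroup E]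
    [NormedSpace ℝ E] {ν : Measure α} {T : α → α} (hT : Measurable T) (hν : ν.map T = ν)
    {F : α → E} (hF : AEStronglyMeasurable F ν) : ∫ y, F (T y) ∂ν = ∫ y, F y ∂ν := by
  rw [← integral_map hT.aemeasurable (hν.symm ▸ hF), hν]

section Orthogonality

variable {G X : Type*} [MeasurableSpace G] [MeasurableSpace X]
  {lam : Measure G} [IsProbabilityMeasure lam] {φ : G → X → X}
  {μ : Measure X} [IsFiniteMeasure μ]

theorem integral_mul_orbitAverage (hφ : Measurable fun p : G × X => φ p.1 p.2)
    (hμ_inv : ∀ g, Measure.map (φ g) μ = μ) {u f : X → ℝ} (hu : Measurable u)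
    (hf : Measurable f) {C D : ℝ} (hub : ∀ y, |u y| ≤ C) (hfb : ∀ y, |f y| ≤ D)
    (hu_inv : ∀ g y, u (φ g y) = u y) :
    ∫ y, u y * orbitAverage lam φ f y ∂μ = ∫ y, u y * f y ∂μ := by
  have hint : Integrable (Function.uncurry fun g y => u y * f (φ g y)) (lam.prod μ) := by
    refine Integrable.of_bound ((hu.comp measurable_snd).mul (hf.comp hφ)).aestronglyMeasurable
      (C * D) (Filter.Eventually.of_forall fun p => ?_)
    rw [Function.uncurry_apply_pair, Real.norm_eq_abs, abs_mul]
    exact mul_le_mul (hub _) (hfb _) (abs_nonneg _) ((abs_nonneg _).trans (hub p.2))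
  calc ∫ y, u y * orbitAverage lam φ f y ∂μ
      = ∫ y, ∫ g, u y * f (φ g y) ∂lam ∂μ := by
        simp only [orbitAverage, integral_const_mul]
    _ = ∫ g, ∫ y, u (φ g y) * f (φ g y) ∂μ ∂lam := by
        rw [← integral_integral_swap hint]
        simp only [hu_inv]
    _ = ∫ _g : G, ∫ y, u y * f y ∂μ ∂lam := by
        congr 1; funext g
        exact integral_comp_eq_of_map_eq (hφ.comp (measurable_const.prodMk measurable_id))
          (hμ_inv g) (hu.mul hf).aestronglyMeasurable
    _ = ∫ y, u y * f y ∂μ := by simp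

theorem integral_sq_eq_integral_sq_orbitAverage_add [Group G] [MeasurableMul G]
    [lam.IsMulRightInvariant] (hφ : Measurable fun p : G × X => φ p.1 p.2)
    (hφ_mul : ∀ g h x, φ (g * h) x = φ g (φ h x)) (hμ_inv : ∀ g, Measure.map (φ g) μ = μ)
    {f : X → ℝ} (hf : Measurable f) {C : ℝ} (hfb : ∀ y, |f y| ≤ C) :
    ∫ y, f y ^ 2 ∂μ
      = ∫ y, orbitAverage lam φ f y ^ 2 ∂μ + ∫ y, (f y - orbitAverage lam φ f y) ^ 2 ∂μ := by
  set a := orbitAverage lam φ f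
  have ha : Measurable a := measurable_orbitAverage hφ hf
  have hab : ∀ y, |a y| ≤ C := abs_orbitAverage_le hfb
  have hfa : ∀ y, |f y - a y| ≤ C + C :=
    fun y => (abs_sub _ _).trans (add_le_add (hfb y) (hab y))
  have hint : ∀ {u v : X → ℝ} {Cu Cv : ℝ}, Measurable u → Measurable v →
      (∀ y, |u y| ≤ Cu) → (∀ y, |v y| ≤ Cv) → Integrable (fun y => u y * v y) μ :=
    fun hu hv hub hvb => (Integrable.of_bound hv.aestronglyMeasurable _
      (Filter.Eventually.of_forall fun y => (Real.norm_eq_abs _).trans_le (hvb y))).bdd_mul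
      hu.aestronglyMeasurable
      (Filter.Eventually.of_forall fun y => (Real.norm_eq_abs _).trans_le (hub y))
  have horth : ∫ y, a y * (f y - a y) ∂μ = 0 := by
    simp only [mul_sub]
    rw [integral_sub (hint ha hf hab hfb) (hint ha ha hab hab),
      integral_mul_orbitAverage hφ hμ_inv ha hf hab hfb (orbitAverage_invariant hφ_mul f),
      sub_self]
  have haa : Integrable (fun y => a y * a y) μ := hint ha ha hab hab
  have hdd : Integrable (fun y => (f y - a y) * (f y - a y)) μ :=
    hint (u := fun y => f y - a y) (v := fun y => f y - a y) (hf.sub ha) (hf.sub ha) hfa hfa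
  have had : Integrable (fun y => a y * (f y - a y)) μ :=
    hint (v := fun y => f y - a y) ha (hf.sub ha) hab hfa
  simp only [sq]
  calc ∫ y, f y * f y ∂μ
      = ∫ y, (a y * a y + (f y - a y) * (f y - a y)) + 2 * (a y * (f y - a y)) ∂μ := by
        congr 1; funext y; ring
    _ = ∫ y, a y * a y ∂μ + ∫ y, (f y - a y) * (f y - a y) ∂μ := by
        have hsum : Integrable (fun y => a y * a y + (f y - a y) * (f y - a y)) μ := haa.add hdd
        rw [integral_add hsum (had.const_mul 2), integral_add haa hdd,
          integral_const_mul, horth, mul_zero, add_zero]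

end Orthogonality

theorem integrable_integral_sq_of_abs_le {α β : Type*} [MeasurableSpace α] [MeasurableSpace β]
    {μ : Measure α} {ν : Measure β} [IsFiniteMeasure μ] [IsFiniteMeasure ν] {F : α × β → ℝ}
    (hF : Measurable F) {C : ℝ} (hC : ∀ p, |F p| ≤ C) :
    Integrable (fun x => ∫ y, F (x, y) ^ 2 ∂ν) μ := by
  refine (Integrable.of_bound (hF.pow_const 2).aestronglyMeasurable (C ^ 2)
    (Filter.Eventually.of_forall fun p => ?_)).integral_prod_left
  rw [Real.norm_eq_abs, abs_pow]
  exact pow_le_pow_left₀ (abs_nonneg _) (hC p) 2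

theorem stmt_15_general {G X : Type*} [Group G] [TopologicalSpace G] [IsTopologicalGroup G]
    [MeasurableSpace G] [BorelSpace G]
    [MeasurableSpace X]
    (lam : Measure G) [IsProbabilityMeasure lam]
    (hlam_left : ∀ g : G, Measure.map (fun h => g * h) lam = lam)
    (hlam_inv : Measure.map (fun g : G => g⁻¹) lam = lam)
    (φ : G → X → X)
    (hφ_meas : Measurable fun p : G × X => φ p.1 p.2)
    (hφ_mul : ∀ g h x, φ (g * h) x = φ g (φ h x))
    (μ : Measure X) [IsProbabilityMeasure μ]
    (hμ_inv : ∀ g : G, Measure.map (φ g) μ = μ)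
    (kk : X → X → ℝ)
    (hk_meas : Measurable fun p : X × X => kk p.1 p.2)
    (hk_symm : ∀ x y, kk x y = kk y x)
    (hk_pos : ∀ (m : ℕ) (xs : Fin m → X), Function.Injective xs →
      (Matrix.of fun i j => kk (xs i) (xs j)).PosSemidef)
    (Mk : ℝ)
    (hMk : IsLUB (Set.range fun x => kk x x) Mk) :
    ∫ x, ∫ y, kk x y ^ 2 ∂μ ∂μ
      = (∫ x, ∫ y, (∫ g, kk x (φ g y) ∂lam) ^ 2 ∂μ ∂μ)
        + ∫ x, ∫ y, (kk x y - ∫ g, kk x (φ g y) ∂lam) ^ 2 ∂μ ∂μ := by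
  have : lam.IsMulLeftInvariant := ⟨hlam_left⟩
  have : lam.IsInvInvariant := ⟨hlam_inv⟩
  have := Measure.isMulRightInvariant_of_isInvInvariant lam
  have hk : ∀ x y, |kk x y| ≤ Mk :=
    abs_le_of_posSemidef_of_diag_le hk_symm hk_pos fun x => hMk.1 ⟨x, rfl⟩
  have hk_avg : ∀ x y, |orbitAverage lam φ (kk x) y| ≤ Mk :=
    fun x => abs_orbitAverage_le (hk x)
  have hk_avg_meas : Measurable fun p : X × X => orbitAverage lam φ (kk p.1) p.2 :=
    measurable_orbitAverage_uncurry hφ_meas hk_meas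
  calc ∫ x, ∫ y, kk x y ^ 2 ∂μ ∂μ
      = ∫ x, (∫ y, orbitAverage lam φ (kk x) y ^ 2 ∂μ
          + ∫ y, (kk x y - orbitAverage lam φ (kk x) y) ^ 2 ∂μ) ∂μ := by
        congr 1; funext x
        exact integral_sq_eq_integral_sq_orbitAverage_add hφ_meas hφ_mul hμ_inv
          (hk_meas.comp (measurable_const.prodMk measurable_id)) (hk x)
    _ = _ := integral_add (integrable_integral_sq_of_abs_le hk_avg_meas fun p => hk_avg p.1 p.2)
          (integrable_integral_sq_of_abs_le (hk_meas.sub hk_avg_meas)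
            fun p => (abs_sub _ _).trans (add_le_add (hk p.1 p.2) (hk_avg p.1 p.2)))

/-- The Pythagorean decomposition `N[k] = N[k̄] + N[k⊥]` of the squared
`L2(μ⊗μ)`-norm of a bounded measurable kernel, where `k̄(x,y) = ∫_G k(x, gy) dλ(g)`
and `k⊥ = k − k̄`. -/
theorem stmt_15 {G X : Type*} [Group G] [TopologicalSpace G] [IsTopologicalGroup G]
    [CompactSpace G] [SecondCountableTopology G] [T2Space G]
    [MeasurableSpace G] [BorelSpace G]
    [TopologicalSpace X] [PolishSpace X] [MeasurableSpace X] [BorelSpace X]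
    (lam : Measure G) [IsProbabilityMeasure lam]
    (hlam_left : ∀ g : G, Measure.map (fun h => g * h) lam = lam)
    (hlam_inv : Measure.map (fun g : G => g⁻¹) lam = lam)
    (φ : G → X → X)
    (hφ_meas : Measurable fun p : G × X => φ p.1 p.2)
    (hφ_one : ∀ x, φ 1 x = x)
    (hφ_mul : ∀ g h x, φ (g * h) x = φ g (φ h x))
    (μ : Measure X) [IsProbabilityMeasure μ]
    (hμ_inv : ∀ g : G, Measure.map (φ g) μ = μ)
    (kk : X → X → ℝ)
    (hk_meas : Measurable fun p : X × X => kk p.1 p.2)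
    (hk_symm : ∀ x y, kk x y = kk y x)
    (hk_pos : ∀ (m : ℕ) (xs : Fin m → X), Function.Injective xs →
      (Matrix.of fun i j => kk (xs i) (xs j)).PosSemidef)
    (Mk : ℝ)
    (hMk : IsLUB (Set.range fun x => kk x x) Mk) :
    ∫ x, ∫ y, kk x y ^ 2 ∂μ ∂μ
      = (∫ x, ∫ y, (∫ g, kk x (φ g y) ∂lam) ^ 2 ∂μ ∂μ)
        + ∫ x, ∫ y, (kk x y - ∫ g, kk x (φ g y) ∂lam) ^ 2 ∂μ ∂μ :=
  stmt_15_general lam hlam_left hlam_inv φ hφ_meas hφ_mul μ hμ_inv kk hk_meas hk_symm hk_pos Mk hMk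
end
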